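/- Let d ≥ 1, let v_1, …, v_{d+1} ∈ ℤ^d be affinely independent over ℝ, suppose 0 lies in the convex hull of {v_1, …, v_{d+1}} but 0 ∉ {v_1, …, v_{d+1}}, set A := {0, v_1, …, v_{d+1}} (a set of d+2 elements), and assume A generates ℤ^d as an additive group. Then the identity (∑_{h≥0} |hA| · t^h) · (1 − t)^{d+2} = 1 − t^D holds in the formal power series ring ℚ[[t]]. -/

import Mathlib

open Pointwise

/-- The `h`-fold sumset `hA` of a set `A` in an additive commutative monoid:
`0A = {0}` and `(n+1)A = A + nA`. -/
def iterSumset {G : Type*} [AddCommMonoid G] (A : Set G) : ℕ → Set G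
  | 0 => {0}
  | n + 1 => A + iterSumset A n

/-- The lift of `v ∈ ℤ^d` to height 1 in `ℤ^(d+1)`. -/
def liftZ {d : ℕ} (v : Fin d → ℤ) : Fin (d + 1) → ℤ := Fin.snoc v 1

/-!
Lift `v_i` to `w_i = (v_i, 1) ∈ ℤ^(d+1)` and put `e = (0, 1)`. An integer relation
`∑ y_i v_i = 0` is the same as `∑ y_i w_i = (∑ y_i) e`. Since `A` generates `ℤ^d`, the quotient of
`ℤ^(d+1)` by the lattice `L` spanned by the `w_i` is cyclic, generated by `e`, of order
`[ℤ^(d+1) : L] = D`. Hence the relations of `v` are exactly the integer multiples of a single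
relation `c` with `∑ c_i = D`, and `c` is `D` times the barycentric coordinates of `0`, so `c ≥ 0`.

Writing `|b| = ∑ b_i`, we have `hA = {∑ b_i v_i : b ∈ ℕ^(d+1), |b| ≤ h}`, and adding multiples of
`c` shows that every element of `hA` has exactly one such representation with `h - D < |b| ≤ h`.
Therefore `|hA| = #{|b| ≤ h} - #{|b| ≤ h - D}`, and the generating series is
`(1 - t^D) / (1 - t)^(d+2)`.
-/

open Finset PowerSeries

theorem mem_iterSumset_insert_zero_range {ι G : Type*} [Fintype ι] [AddCommMonoid G]
    (u : ι → G) (h : ℕ) (x : G) :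
    x ∈ iterSumset (insert 0 (Set.range u)) h ↔
      ∃ b : ι → ℕ, ∑ i, b i ≤ h ∧ ∑ i, b i • u i = x := by
  classical
  have hadd_single : ∀ (b : ι → ℕ) (j : ι),
      ∑ i, (b + Pi.single j 1 : ι → ℕ) i = ∑ i, b i + 1 ∧
        ∑ i, (b + Pi.single j 1 : ι → ℕ) i • u i = u j + ∑ i, b i • u i := by
    intro b j
    simp [sum_add_distrib, add_smul, Pi.single_apply, add_comm]
  induction h generalizing x with
  | zero =>
    simp only [iterSumset, Set.mem_singleton_iff, Nat.le_zero, sum_eq_zero_iff, mem_univ,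
      true_implies]
    constructor
    · rintro rfl
      exact ⟨0, fun _ => rfl, by simp⟩
    · rintro ⟨b, hb, rfl⟩
      simp [hb]
  | succ h ih =>
    simp only [iterSumset, Set.mem_add, Set.mem_insert_iff, Set.mem_range, ih]
    constructor
    · rintro ⟨a, ha, _, ⟨b, hb, rfl⟩, rfl⟩
      rcases ha with rfl | ⟨j, rfl⟩
      · exact ⟨b, by omega, (zero_add _).symm⟩
      · obtain ⟨hsum, hsmul⟩ := hadd_single b j
        exact ⟨b + Pi.single j 1, by omega, hsmul⟩
    · rintro ⟨b, hb, rfl⟩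
      by_cases hbh : ∑ i, b i ≤ h
      · exact ⟨0, Or.inl rfl, _, ⟨b, hbh, rfl⟩, zero_add _⟩
      obtain ⟨j, -, hj⟩ := exists_ne_zero_of_sum_ne_zero (s := univ) (f := b) (by omega)
      have hb' : b - Pi.single j 1 + Pi.single j 1 = b := by
        ext i
        by_cases hij : i = j
        · subst hij; simp; omega
        · simp [hij]
      obtain ⟨hsum, hsmul⟩ := hadd_single (b - Pi.single j 1) j
      rw [hb'] at hsum hsmul
      exact ⟨u j, Or.inr ⟨j, rfl⟩, _, ⟨b - Pi.single j 1, by omega, rfl⟩, hsmul.symm⟩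

theorem finite_setOf_sum_le {ι : Type*} [Fintype ι] (h : ℕ) :
    {b : ι → ℕ | ∑ i, b i ≤ h}.Finite := by
  classical
  exact (Set.finite_Iic fun _ => h).subset fun b hb i =>
    (single_le_sum (fun _ _ => Nat.zero_le _) (mem_univ i)).trans hb

theorem ncard_setOf_sum_le (n h : ℕ) :
    {b : Fin n → ℕ | ∑ i, b i ≤ h}.ncard = (n + h).choose n := by
  classical
  have himage : {b : Fin n → ℕ | ∑ i, b i ≤ h} =
      Fin.tail '' (piAntidiag (univ : Finset (Fin (n + 1))) h : Set (Fin (n + 1) → ℕ)) := by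
    ext b
    simp only [Set.mem_ofPred_eq, Set.mem_image, mem_coe, mem_piAntidiag, Fin.sum_univ_succ]
    constructor
    · intro hb
      exact ⟨Fin.cons (h - ∑ i, b i) b, by simp; omega, Fin.tail_cons _ _⟩
    · rintro ⟨x, hx, rfl⟩
      simp only [Fin.tail]
      omega
  have hinj : Set.InjOn Fin.tail
      (piAntidiag (univ : Finset (Fin (n + 1))) h : Set (Fin (n + 1) → ℕ)) := by
    intro x hx y hy hxy
    simp only [mem_coe, mem_piAntidiag, Fin.sum_univ_succ] at hx hy
    have h0 : x 0 = y 0 := by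
      have := congrArg (fun t => ∑ i, t i) hxy
      simp only [Fin.tail] at this
      omega
    rw [← Fin.cons_self_tail x, ← Fin.cons_self_tail y, hxy, h0]
  rw [himage, hinj.ncard_image, Set.ncard_coe_finset, ← map_sym_eq_piAntidiag, card_map,
    sym_univ, card_univ, Sym.card_sym_eq_choose, Fintype.card_fin, Nat.add_right_comm,
    Nat.add_sub_cancel, Nat.choose_symm_add]

theorem mk_ncard_setOf_sum_le_mul_one_sub_pow (S : Type*) [CommRing S] (n : ℕ) :
    (PowerSeries.mk fun h => ({b : Fin n → ℕ | ∑ i, b i ≤ h}.ncard : S)) * (1 - X) ^ (n + 1)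
      = 1 := by
  simp_rw [ncard_setOf_sum_le]
  exact mk_add_choose_mul_one_sub_pow_eq_one S n

section SingleRelation

variable {ι G : Type*} [Fintype ι] {c : ι → ℕ}

theorem iterSumset_insert_zero_range_eq_image [AddCommMonoid G] {u : ι → G}
    (hc : ∑ i, c i • u i = 0) (hc0 : 0 < ∑ i, c i) (h : ℕ) :
    iterSumset (insert 0 (Set.range u)) h =
      (fun b : ι → ℕ => ∑ i, b i • u i) '' {b | ∑ i, b i ≤ h ∧ h < ∑ i, b i + ∑ i, c i} := by
  ext x
  rw [mem_iterSumset_insert_zero_range]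
  constructor
  · rintro ⟨b, hb, rfl⟩
    obtain ⟨q, r, hqr, hr⟩ : ∃ q r, h - ∑ i, b i = q * ∑ i, c i + r ∧ r < ∑ i, c i :=
      ⟨_, _, (Nat.div_add_mod' _ _).symm, Nat.mod_lt _ hc0⟩
    have hsum : ∑ i, (b + q • c) i = ∑ i, b i + q * ∑ i, c i := by
      simp [sum_add_distrib, mul_sum]
    refine ⟨b + q • c, ⟨?_, ?_⟩, ?_⟩
    · rw [hsum]; omega
    · rw [hsum]; omega
    · simp [sum_add_distrib, add_smul, mul_smul, ← smul_sum, hc]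
  · rintro ⟨b, ⟨hb, -⟩, rfl⟩
    exact ⟨b, hb, rfl⟩

theorem injOn_sum_smul [AddCommGroup G] {u : ι → G}
    (hrel : ∀ y : ι → ℤ, ∑ i, y i • u i = 0 → ∃ k : ℤ, ∀ i, y i = k * c i) (h : ℕ) :
    Set.InjOn (fun b : ι → ℕ => ∑ i, b i • u i)
      {b | ∑ i, b i ≤ h ∧ h < ∑ i, b i + ∑ i, c i} := by
  rintro b ⟨hb, hb'⟩ b' ⟨hb₂, hb₂'⟩ heq
  obtain ⟨k, hk⟩ := hrel (fun i => b i - b' i) (by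
    simp only [sub_smul, sum_sub_distrib, natCast_zsmul]
    exact sub_eq_zero.mpr heq)
  have hdiff : ((∑ i, b i : ℕ) : ℤ) - (∑ i, b' i : ℕ) = k * (∑ i, c i : ℕ) := by
    push_cast
    rw [← sum_sub_distrib, mul_sum]
    exact sum_congr rfl fun i _ => hk i
  have hk0 : k = 0 := by
    generalize ∑ i, b i = B at hb hb' hdiff
    generalize ∑ i, b' i = B' at hb₂ hb₂' hdiff
    generalize ∑ i, c i = D at hb' hb₂' hdiff
    rcases lt_trichotomy k 0 with hneg | hzero | hpos
    · nlinarith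
    · exact hzero
    · nlinarith
  funext i
  simpa [hk0, sub_eq_zero] using hk i

theorem ncard_iterSumset_add_ncard [AddCommGroup G] {u : ι → G}
    (hc : ∑ i, c i • u i = 0) (hc0 : 0 < ∑ i, c i)
    (hrel : ∀ y : ι → ℤ, ∑ i, y i • u i = 0 → ∃ k : ℤ, ∀ i, y i = k * c i) (h : ℕ) :
    (iterSumset (insert 0 (Set.range u)) h).ncard +
        {b : ι → ℕ | ∑ i, b i + ∑ i, c i ≤ h}.ncard = {b : ι → ℕ | ∑ i, b i ≤ h}.ncard := by
  rw [iterSumset_insert_zero_range_eq_image hc hc0, (injOn_sum_smul hrel h).ncard_image]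
  have hsub : {b : ι → ℕ | ∑ i, b i + ∑ i, c i ≤ h} ⊆ {b | ∑ i, b i ≤ h} :=
    fun b (hb : _ ≤ h) => show _ ≤ h by omega
  have hdiff : {b : ι → ℕ | ∑ i, b i ≤ h ∧ h < ∑ i, b i + ∑ i, c i} =
      {b | ∑ i, b i ≤ h} \ {b | ∑ i, b i + ∑ i, c i ≤ h} := by
    ext b
    simp only [Set.mem_ofPred_eq, Set.mem_sdiff]
    omega
  rw [hdiff]
  exact Set.ncard_sdiff_add_ncard_of_subset hsub (finite_setOf_sum_le h)

theorem mk_ncard_iterSumset (S : Type*) [CommRing S] [AddCommGroup G] {u : ι → G}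
    (hc : ∑ i, c i • u i = 0) (hc0 : 0 < ∑ i, c i)
    (hrel : ∀ y : ι → ℤ, ∑ i, y i • u i = 0 → ∃ k : ℤ, ∀ i, y i = k * c i) :
    (PowerSeries.mk fun h => ((iterSumset (insert 0 (Set.range u)) h).ncard : S)) =
      (1 - X ^ ∑ i, c i) * PowerSeries.mk fun h => ({b : ι → ℕ | ∑ i, b i ≤ h}.ncard : S) := by
  ext h
  rw [sub_mul, one_mul, map_sub, coeff_X_pow_mul', coeff_mk, coeff_mk, eq_sub_iff_add_eq,
    ← ncard_iterSumset_add_ncard hc hc0 hrel h, Nat.cast_add]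
  split_ifs with hD
  · rw [coeff_mk]
    congr 3
    ext b
    simp only [Set.mem_ofPred_eq]
    omega
  · have hempty : {b : ι → ℕ | ∑ i, b i + ∑ i, c i ≤ h} = ∅ :=
      Set.eq_empty_of_forall_notMem fun b (hb : _ ≤ h) => hD (by omega)
    rw [hempty, Set.ncard_empty, Nat.cast_zero, add_zero]

end SingleRelation

theorem exists_weights_of_mem_convexHull_range {k E ι : Type*} [Field k] [LinearOrder k]
    [IsStrictOrderedRing k] [AddCommGroup E] [Module k E] [Fintype ι] {p : ι → E} {x : E}
    (hx : x ∈ convexHull k (Set.range p)) :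
    ∃ w : ι → k, (∀ i, 0 ≤ w i) ∧ ∑ i, w i = 1 ∧ ∑ i, w i • p i = x := by
  classical
  have hrange : Set.range p =
      Fintype.linearCombination k p '' Set.range fun i => Pi.single i 1 := by
    rw [← Set.range_comp]
    congr 1
    ext i
    simp
  rw [hrange, ← LinearMap.image_convexHull, convexHull_rangle_single_eq_stdSimplex] at hx
  obtain ⟨w, ⟨hw0, hw1⟩, rfl⟩ := hx
  exact ⟨w, hw0, hw1, (Fintype.linearCombination_apply k p w).symm⟩

theorem AffineIndependent.nonneg_of_sum_smul_eq_zero {k E ι : Type*} [Field k] [LinearOrder k]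
    [IsStrictOrderedRing k] [AddCommGroup E] [Module k E] [Fintype ι] {p : ι → E}
    (hp : AffineIndependent k p) (h0 : (0 : E) ∈ convexHull k (Set.range p)) {y : ι → k}
    (hy : ∑ i, y i • p i = 0) (hy0 : 0 ≤ ∑ i, y i) (i : ι) : 0 ≤ y i := by
  obtain ⟨w, hw0, hw1, hwp⟩ := exists_weights_of_mem_convexHull_range h0
  have hyw := hp.eq_of_sum_eq_sum (s := univ) (w₁ := y) (w₂ := (∑ j, y j) • w)
    (by simp [← mul_sum, hw1]) (by simp [hy, mul_smul, ← smul_sum, hwp]) i (mem_univ i)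
  rw [hyw]
  exact mul_nonneg hy0 (hw0 i)

theorem AddSubgroup.zsmul_mem_iff_index_dvd {G : Type*} [AddCommGroup G] {L : AddSubgroup G}
    {e : G} (h : L ⊔ AddSubgroup.zmultiples e = ⊤) (k : ℤ) :
    k • e ∈ L ↔ (L.index : ℤ) ∣ k := by
  have hcyclic : AddSubgroup.zmultiples (QuotientAddGroup.mk e : G ⧸ L) = ⊤ := by
    have := congrArg (AddSubgroup.map (QuotientAddGroup.mk' L)) h
    rwa [AddSubgroup.map_sup, QuotientAddGroup.map_mk'_self, bot_sup_eq,
      AddMonoidHom.map_zmultiples, AddSubgroup.map_top_of_surjective _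
        (QuotientAddGroup.mk'_surjective L)] at this
  have hindex : L.index = addOrderOf (QuotientAddGroup.mk e : G ⧸ L) := by
    rw [← Nat.card_zmultiples, hcyclic, AddSubgroup.card_top]
    rfl
  rw [hindex, ← QuotientAddGroup.eq_zero_iff, QuotientAddGroup.mk_zsmul,
    addOrderOf_dvd_iff_zsmul_eq_zero]

theorem Matrix.det_of_ne_zero_of_linearIndependent {ι R : Type*} [Fintype ι] [DecidableEq ι]
    [CommRing R] [IsDomain R] {w : ι → ι → R} (hw : LinearIndependent R w) :
    (Matrix.of w).det ≠ 0 := by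
  intro h
  obtain ⟨y, hy0, hy⟩ := Matrix.exists_vecMul_eq_zero_iff.mpr h
  rw [Matrix.vecMul_eq_sum] at hy
  exact hy0 (funext (Fintype.linearIndependent_iff.mp hw y hy))

theorem index_span_range_eq_natAbs_det {ι : Type*} [Fintype ι] [DecidableEq ι]
    {w : ι → ι → ℤ} (hw : LinearIndependent ℤ w) :
    (Submodule.span ℤ (Set.range w)).toAddSubgroup.index = (Matrix.of w).det.natAbs := by
  have := Submodule.natAbs_det_basis_change (Pi.basisFun ℤ ι) _ (Module.Basis.span hw)
  rw [show ((↑) ∘ Module.Basis.span hw) = w from funext fun i => by simp [Module.Basis.span_apply],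
    Pi.basisFun_det_apply] at this
  rw [this]
  rfl

section Lift

variable {d : ℕ} {ι : Type*}

theorem sum_zsmul_liftZ [Fintype ι] (y : ι → ℤ) (v : ι → Fin d → ℤ) :
    ∑ i, y i • liftZ (v i) = Fin.snoc (∑ i, y i • v i) (∑ i, y i) := by
  ext r
  refine Fin.lastCases ?_ (fun j => ?_) r <;> simp [liftZ, Finset.sum_apply]

theorem sum_zsmul_liftZ_eq_zsmul_liftZ_zero_iff [Fintype ι] (y : ι → ℤ) (v : ι → Fin d → ℤ)
    (k : ℤ) : ∑ i, y i • liftZ (v i) = k • liftZ 0 ↔ ∑ i, y i • v i = 0 ∧ ∑ i, y i = k := by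
  have hk : k • liftZ (0 : Fin d → ℤ) = Fin.snoc 0 k := by
    ext r
    refine Fin.lastCases ?_ (fun j => ?_) r <;> simp [liftZ]
  rw [sum_zsmul_liftZ, hk, Fin.snoc_inj]

theorem sum_intCast_smul_eq_zero [Fintype ι] {v : ι → Fin d → ℤ} {y : ι → ℤ}
    (hyv : ∑ i, y i • v i = 0) : ∑ i, (y i : ℝ) • (fun j => (v i j : ℝ)) = 0 := by
  ext j
  simpa [Finset.sum_apply] using congrArg (fun x : Fin d → ℤ => (x j : ℝ)) hyv

theorem eq_zero_of_sum_zsmul_eq_zero [Fintype ι] {v : ι → Fin d → ℤ}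
    (haff : AffineIndependent ℝ (fun i (j : Fin d) => (v i j : ℝ))) {y : ι → ℤ}
    (hyv : ∑ i, y i • v i = 0) (hy : ∑ i, y i = 0) : y = 0 := by
  funext i
  exact_mod_cast haff.eq_zero_of_sum_eq_zero (s := univ) (w := fun i => (y i : ℝ))
    (by exact_mod_cast hy) (sum_intCast_smul_eq_zero hyv) i (mem_univ i)

theorem linearIndependent_liftZ [Fintype ι] {v : ι → Fin d → ℤ}
    (haff : AffineIndependent ℝ (fun i (j : Fin d) => (v i j : ℝ))) :
    LinearIndependent ℤ fun i => liftZ (v i) := by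
  refine Fintype.linearIndependent_iff.mpr fun y hy i => ?_
  rw [← zero_smul ℤ (liftZ 0), sum_zsmul_liftZ_eq_zsmul_liftZ_zero_iff] at hy
  exact congrFun (eq_zero_of_sum_zsmul_eq_zero haff hy.1 hy.2) i

theorem span_liftZ_sup_zmultiples_eq_top {v : ι → Fin d → ℤ}
    (hgen : AddSubgroup.closure (insert 0 (Set.range v)) = ⊤) :
    (Submodule.span ℤ (Set.range fun i => liftZ (v i))).toAddSubgroup ⊔
      AddSubgroup.zmultiples (liftZ 0) = ⊤ := by
  set L := (Submodule.span ℤ (Set.range fun i => liftZ (v i))).toAddSubgroup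
  let π : (Fin (d + 1) → ℤ) →+ (Fin d → ℤ) :=
    (LinearMap.funLeft ℤ ℤ (Fin.castSucc : Fin d → Fin (d + 1))).toAddMonoidHom
  have hπ : ∀ u, π (liftZ u) = u := fun u => funext fun j => by
    simp [π, liftZ, LinearMap.funLeft]
  have hker : ∀ z, π z = 0 → z = z (Fin.last d) • liftZ 0 := by
    intro z hz
    ext r
    refine Fin.lastCases ?_ (fun j => ?_) r
    · simp [liftZ]
    · simpa [π, liftZ, LinearMap.funLeft] using congrFun hz j
  have hclosure : AddSubgroup.closure (insert 0 (Set.range v)) ≤ L.map π := by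
    rw [AddSubgroup.closure_le]
    rintro _ (rfl | ⟨i, rfl⟩)
    · exact zero_mem _
    · exact ⟨liftZ (v i), Submodule.subset_span ⟨i, rfl⟩, hπ (v i)⟩
  rw [eq_top_iff]
  intro x _
  obtain ⟨l, hl, hlx⟩ := hclosure (hgen ▸ AddSubgroup.mem_top (π x))
  rw [← add_sub_cancel l x, hker (x - l) (by rw [map_sub, hlx, sub_self])]
  exact AddSubgroup.add_mem_sup hl (AddSubgroup.zsmul_mem_zmultiples _ _)

theorem nonneg_of_sum_zsmul_eq_zero [Fintype ι] {v : ι → Fin d → ℤ}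
    (haff : AffineIndependent ℝ (fun i (j : Fin d) => (v i j : ℝ)))
    (h0hull : (0 : Fin d → ℝ) ∈ convexHull ℝ (Set.range (fun i (j : Fin d) => (v i j : ℝ))))
    {y : ι → ℤ} (hyv : ∑ i, y i • v i = 0) (hy : 0 ≤ ∑ i, y i) (i : ι) : 0 ≤ y i := by
  have hy' : (0 : ℝ) ≤ ∑ i, (y i : ℝ) := by exact_mod_cast hy
  exact_mod_cast haff.nonneg_of_sum_smul_eq_zero h0hull (sum_intCast_smul_eq_zero hyv) hy' i

end Lift

section Simplex

variable {d : ℕ} {v : Fin (d + 1) → Fin d → ℤ}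

theorem natCast_index_span_liftZ (haff : AffineIndependent ℝ (fun i (j : Fin d) => (v i j : ℝ))) :
    ((Submodule.span ℤ (Set.range fun i => liftZ (v i))).toAddSubgroup.index : ℤ) =
      |(Matrix.of fun r c => liftZ (v c) r).det| := by
  rw [index_span_range_eq_natAbs_det (linearIndependent_liftZ haff), Int.natCast_natAbs,
    ← Matrix.det_transpose]
  rfl

theorem det_liftZ_ne_zero (haff : AffineIndependent ℝ (fun i (j : Fin d) => (v i j : ℝ))) :
    (Matrix.of fun r c => liftZ (v c) r).det ≠ 0 := by
  rw [← Matrix.det_transpose]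
  exact Matrix.det_of_ne_zero_of_linearIndependent (linearIndependent_liftZ haff)

theorem exists_relation_generator
    (haff : AffineIndependent ℝ (fun i (j : Fin d) => (v i j : ℝ)))
    (h0hull : (0 : Fin d → ℝ) ∈ convexHull ℝ (Set.range (fun i (j : Fin d) => (v i j : ℝ))))
    (hgen : AddSubgroup.closure (insert 0 (Set.range v)) = ⊤) :
    ∃ c : Fin (d + 1) → ℕ, ∑ i, c i • v i = 0 ∧ 0 < ∑ i, c i ∧
      ((∑ i, c i : ℕ) : ℤ) = |(Matrix.of fun r c => liftZ (v c) r).det| ∧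
      ∀ y : Fin (d + 1) → ℤ, ∑ i, y i • v i = 0 → ∃ k : ℤ, ∀ i, y i = k * c i := by
  set L := (Submodule.span ℤ (Set.range fun i => liftZ (v i))).toAddSubgroup
  have hsup := span_liftZ_sup_zmultiples_eq_top hgen
  have hindex : (L.index : ℤ) = |(Matrix.of fun r c => liftZ (v c) r).det| :=
    natCast_index_span_liftZ haff
  have hdvd : ∀ y : Fin (d + 1) → ℤ, ∑ i, y i • v i = 0 → (L.index : ℤ) ∣ ∑ i, y i := by
    intro y hy
    rw [← AddSubgroup.zsmul_mem_iff_index_dvd hsup,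
      ← (sum_zsmul_liftZ_eq_zsmul_liftZ_zero_iff y v (∑ i, y i)).mpr ⟨hy, rfl⟩]
    exact sum_mem fun i _ =>
      zsmul_mem (Submodule.subset_span (Set.mem_range_self (f := fun i => liftZ (v i)) i)) _
  obtain ⟨c, hc⟩ : ∃ c : Fin (d + 1) → ℤ, ∑ i, c i • liftZ (v i) = (L.index : ℤ) • liftZ 0 :=
    (Submodule.mem_span_range_iff_exists_fun ℤ).mp
      ((AddSubgroup.zsmul_mem_iff_index_dvd hsup _).mpr dvd_rfl)
  obtain ⟨hcv, hcsum⟩ := (sum_zsmul_liftZ_eq_zsmul_liftZ_zero_iff c v _).mp hc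
  have hcast : ∀ i, ((c i).toNat : ℤ) = c i := fun i =>
    Int.toNat_of_nonneg (nonneg_of_sum_zsmul_eq_zero haff h0hull hcv (hcsum ▸ by positivity) i)
  refine ⟨fun i => (c i).toNat, ?_, ?_, ?_, ?_⟩
  · calc ∑ i, (c i).toNat • v i = ∑ i, c i • v i :=
          sum_congr rfl fun i _ => by rw [← natCast_zsmul, hcast]
      _ = 0 := hcv
  · have hpos : (0 : ℤ) < ∑ i, ((c i).toNat : ℤ) := by
      simp only [hcast, hcsum, hindex]
      exact abs_pos.mpr (det_liftZ_ne_zero haff)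
    exact_mod_cast hpos
  · push_cast
    simp [hcast, hcsum, hindex]
  · intro y hy
    obtain ⟨k, hk⟩ := hdvd y hy
    refine ⟨k, fun i => ?_⟩
    have := eq_zero_of_sum_zsmul_eq_zero haff (y := y - k • c)
      (by simp only [Pi.sub_apply, Pi.smul_apply, smul_eq_mul, sub_smul, mul_smul,
        sum_sub_distrib, ← smul_sum, hy, hcv, smul_zero, sub_zero])
      (by simp only [Pi.sub_apply, Pi.smul_apply, smul_eq_mul, sum_sub_distrib, ← mul_sum,
        hcsum, hk, mul_comm, sub_self])
    simpa [hcast, sub_eq_zero] using congrFun this i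

end Simplex

theorem generating_series_dplus2_simplex_general (d : ℕ)
    (v : Fin (d + 1) → Fin d → ℤ)
    (haff : AffineIndependent ℝ (fun i (j : Fin d) => (v i j : ℝ)))
    (h0hull : (0 : Fin d → ℝ) ∈
      convexHull ℝ (Set.range (fun i (j : Fin d) => (v i j : ℝ))))
    (hgen : AddSubgroup.closure (insert 0 (Set.range v)) =
      (⊤ : AddSubgroup (Fin d → ℤ)))
    (D : ℕ) (hD : (D : ℤ) = |(Matrix.of fun r c => liftZ (v c) r).det|) :
    (PowerSeries.mk fun h : ℕ =>
        ((iterSumset (insert 0 (Set.range v)) h).ncard : ℚ)) *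
      (1 - PowerSeries.X) ^ (d + 2) = 1 - PowerSeries.X ^ D := by
  obtain ⟨c, hcv, hc0, hcD, hrel⟩ := exists_relation_generator haff h0hull hgen
  have hcD' : ∑ i, c i = D := by exact_mod_cast hcD.trans hD.symm
  rw [mk_ncard_iterSumset ℚ hcv hc0 hrel, hcD', mul_assoc,
    mk_ncard_setOf_sum_le_mul_one_sub_pow, mul_one]

theorem generating_series_dplus2_simplex (d : ℕ) (hd : 1 ≤ d)
    (v : Fin (d + 1) → Fin d → ℤ)
    (haff : AffineIndependent ℝ (fun i (j : Fin d) => (v i j : ℝ)))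
    (h0hull : (0 : Fin d → ℝ) ∈
      convexHull ℝ (Set.range (fun i (j : Fin d) => (v i j : ℝ))))
    (h0nv : (0 : Fin d → ℤ) ∉ Set.range v)
    (hgen : AddSubgroup.closure (insert 0 (Set.range v)) =
      (⊤ : AddSubgroup (Fin d → ℤ)))
    (D : ℕ) (hD : (D : ℤ) = |(Matrix.of fun r c => liftZ (v c) r).det|) :
    (PowerSeries.mk fun h : ℕ =>
        ((iterSumset (insert 0 (Set.range v)) h).ncard : ℚ)) *
      (1 - PowerSeries.X) ^ (d + 2) = 1 - PowerSeries.X ^ D :=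
  generating_series_dplus2_simplex_general d v haff h0hull hgen D hD
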